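/- With m = inf_{x > 0} h(x), the quantity Θ = (12 - 3m)/e² satisfies |Θ - 0.5172| < 5·10^{-5}; that is, the Gaussian density of the Page metric equals 0.5172 to four decimal places. -/
import Mathlib


open Real Set

/-- The rational function from LeBrun whose minimum over `(0,∞)` gives
the minimal Calabi energy `c_min = 96π² · min h` for the Page metric. -/
noncomputable def h (x : ℝ) : ℝ :=
  (4 + 14*x + 16*x^2 + 3*x^3) / (x * (6 + 6*x + x^2))

lemma h_lower : ∀ y ∈ h '' Set.Ioi (0:ℝ), (2.7261:ℝ) ≤ y := by
  rintro y ⟨x, hx, rfl⟩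
  have hx : (0:ℝ) < x := hx
  have hden : 0 < x * (6 + 6*x + x^2) := by nlinarith [sq_nonneg x]
  rw [h, le_div_iff₀ hden]
  nlinarith [sq_nonneg (x - 2.182), mul_pos hx hx, sq_nonneg x,
    mul_nonneg (mul_nonneg hx.le hx.le) (sq_nonneg (x - 2.182)),
    mul_nonneg hx.le (sq_nonneg (x - 2.182))]

lemma h_upper : h (2.18:ℝ) ≤ 2.72624 := by
  rw [h, div_le_iff₀ (by norm_num)]
  norm_num

/-- With `m = inf_{x>0} h x`, the Gaussian density `Θ = (12 - 3m)/e²` of the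
Page metric equals `0.5172` to four decimal places. -/
theorem stmt_16 :
    |(12 - 3 * sInf (h '' Set.Ioi (0 : ℝ))) / Real.exp 2 - 0.5172| < 5e-5 := by
  set m := sInf (h '' Set.Ioi (0 : ℝ)) with hm
  have hne : (h '' Set.Ioi (0:ℝ)).Nonempty := ⟨h 2.18, ⟨2.18, by norm_num, rfl⟩⟩
  have hbdd : BddBelow (h '' Set.Ioi (0:ℝ)) := ⟨2.7261, h_lower⟩
  have hmlo : (2.7261:ℝ) ≤ m := le_csInf hne h_lower
  have hmhi : m ≤ 2.72624 :=
    le_trans (csInf_le hbdd ⟨2.18, by norm_num, rfl⟩) h_upper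
  have he2 : Real.exp 2 = Real.exp 1 * Real.exp 1 := by
    rw [← Real.exp_add]; norm_num
  have h1 : (2.7182818283:ℝ) < Real.exp 1 := Real.exp_one_gt_d9
  have h2 : Real.exp 1 < 2.7182818286 := Real.exp_one_lt_d9
  have hepos : (0:ℝ) < Real.exp 2 := Real.exp_pos 2
  rw [abs_lt]
  constructor
  · rw [lt_sub_iff_add_lt, lt_div_iff₀ hepos]
    nlinarith
  · rw [sub_lt_iff_lt_add, div_lt_iff₀ hepos]
    nlinarith
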